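/- There exists ε > 0 such that for all real X with |X| < ε, F(-1/4, -7/12; 2/3; X) = (1 - 42X - 7X^2)^(1/4) · F(1/4, -1/12; 2/3; -X·(X^2-42X-7)^3 / (7X^2+42X-1)^3). (This is the algebraic hypergeometric transformation induced by the degree 7 Klein pull-back covering Z = -X(X^2-42X-7)^3/(7X^2+42X-1)^3 from local exponent differences (3/2,1/3,1/3) to the standard tetrahedral equation.) -/

import Mathlib

open Real

/-- The Gauss hypergeometric series `F(a,b;c;z) = ∑ ((a)_n (b)_n / ((c)_n n!)) z^n`,
where `(q)_n` is the rising (Pochhammer) factorial. -/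
noncomputable def hypgeo (a b c z : ℝ) : ℝ :=
  ∑' n : ℕ, ((∏ i ∈ Finset.range n, (a + i)) * (∏ i ∈ Finset.range n, (b + i)) /
    ((∏ i ∈ Finset.range n, (c + i)) * (Nat.factorial n))) * z ^ n

/-!
Both sides solve Gauss's equation with parameters `(-1/4, -7/12; 2/3)` near `0`. For the left side
this is the coefficient recurrence of the series. For the right side, substituting
`Z = x P³ / U³` (with `P = x² - 42x - 7`, `U = 1 - 42x - 7x²`) into the tetrahedral equation
`(1/4, -1/12; 2/3)` and multiplying by `U^(1/4)` gives back the source equation: after eliminating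
`G''` this is a pair of identities between rational functions of `x`. Two solutions that are
differentiable at the regular singular point `0` have Wronskian `C x^(-2/3) (1 - x)^(1/2)` with
`C = 0`, so they are proportional, and both take the value `1` at `0`.
-/

open Set Filter Topology Asymptotics Metric

noncomputable section

def powSeries (c : ℕ → ℝ) (x : ℝ) : ℝ := ∑' n, c n * x ^ n

lemma powSeries_zero (c : ℕ → ℝ) : powSeries c 0 = c 0 := by
  rw [powSeries, tsum_eq_single 0 fun n hn => by simp [hn]]
  simp

def derivCoeff (c : ℕ → ℝ) (n : ℕ) : ℝ := (n + 1) * c (n + 1)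

def PolyBounded (c : ℕ → ℝ) : Prop := ∃ k : ℕ, c =O[atTop] fun n => (n : ℝ) ^ k

lemma polyBounded_of_abs_le {c : ℕ → ℝ} {C : ℝ} (h : ∀ n, |c n| ≤ C) : PolyBounded c :=
  ⟨0, .of_bound C (.of_forall fun n => by simpa using h n)⟩

namespace PolyBounded

variable {c : ℕ → ℝ}

lemma summable_norm_mul_pow (hc : PolyBounded c) {x : ℝ} (hx : |x| < 1) :
    Summable fun n => ‖c n * x ^ n‖ := by
  obtain ⟨k, hk⟩ := hc
  exact summable_norm_mul_geometric_of_norm_lt_one' (k := k) hx (by simpa using hk)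

lemma derivCoeff (hc : PolyBounded c) : PolyBounded (derivCoeff c) := by
  obtain ⟨k, hk⟩ := hc
  have hlin : (fun n : ℕ => (n : ℝ) + 1) =O[atTop] fun n => (n : ℝ) :=
    .of_bound 2 <| by
      filter_upwards [eventually_ge_atTop 1] with n hn
      have : (1 : ℝ) ≤ n := by exact_mod_cast hn
      simp only [norm_eq_abs]
      rw [abs_of_pos (by positivity), abs_of_pos (by positivity)]
      linarith
  have hshift : (fun n : ℕ => c (n + 1)) =O[atTop] fun n => ((n : ℝ) + 1) ^ k := by
    simpa [Function.comp_def] using hk.comp_tendsto (tendsto_add_atTop_nat 1)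
  refine ⟨k + 1, ?_⟩
  show (fun n : ℕ => ((n : ℝ) + 1) * c (n + 1)) =O[atTop] _
  simpa [_root_.derivCoeff, pow_succ, mul_comm] using hlin.mul (hshift.trans (hlin.pow k))

lemma hasDerivAt_powSeries (hc : PolyBounded c) {x : ℝ} (hx : |x| < 1) :
    HasDerivAt (powSeries c) (powSeries (_root_.derivCoeff c) x) x := by
  obtain ⟨r, hxr, hr⟩ := exists_between hx
  replace hr : |r| < 1 := by rwa [abs_of_pos ((abs_nonneg x).trans_lt hxr)]
  replace hxr : x ∈ ball (0 : ℝ) r := by rwa [mem_ball_zero_iff, norm_eq_abs]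
  have htail : HasDerivAt (fun y => ∑' n, c (n + 1) * y ^ (n + 1))
      (∑' n, _root_.derivCoeff c n * x ^ n) x := by
    refine hasDerivAt_tsum_of_isPreconnected (g := fun n y => c (n + 1) * y ^ (n + 1))
      (g' := fun n y => _root_.derivCoeff c n * y ^ n) (hc.derivCoeff.summable_norm_mul_pow hr)
      isOpen_ball (convex_ball 0 r).isPreconnected (fun n y _ => ?_) (fun n y hy => ?_) hxr ?_ hxr
    · exact ((hasDerivAt_pow (n + 1) y).const_mul (c (n + 1))).congr_deriv
        (by simp [_root_.derivCoeff]; ring)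
    · rw [mem_ball_zero_iff] at hy
      rw [norm_mul, norm_mul, norm_pow, norm_pow]
      gcongr
      exact hy.le.trans (le_abs_self r)
    · exact (summable_nat_add_iff 1).mpr (hc.summable_norm_mul_pow hx).of_norm
  refine (htail.const_add (c 0)).congr_of_eventuallyEq ?_
  filter_upwards [isOpen_lt continuous_abs continuous_const |>.mem_nhds hx] with y hy
  exact tsum_eq_zero_add' ((summable_nat_add_iff 1).mpr (hc.summable_norm_mul_pow hy).of_norm)
    |>.trans (by simp)

end PolyBounded

lemma HasSum.natCast_mul_of_derivCoeff {c : ℕ → ℝ} {x S : ℝ}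
    (h : HasSum (fun n => derivCoeff c n * x ^ n) S) :
    HasSum (fun n => n * c n * x ^ n) (x * S) := by
  refine (hasSum_nat_add_iff' 1).mp ?_
  simpa [derivCoeff, pow_succ, mul_comm, mul_left_comm, mul_assoc] using h.mul_left x

def hypergeometricOp (a b c x F F' F'' : ℝ) : ℝ :=
  x * (1 - x) * F'' + (c - (a + b + 1) * x) * F' - a * b * F

def hypgeoCoeff (a b c : ℝ) (n : ℕ) : ℝ :=
  (∏ i ∈ Finset.range n, (a + i)) * (∏ i ∈ Finset.range n, (b + i)) /
    ((∏ i ∈ Finset.range n, (c + i)) * (Nat.factorial n))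

section Hypergeometric

variable {a b c : ℝ}

lemma hypgeo_eq_powSeries (a b c : ℝ) : hypgeo a b c = powSeries (hypgeoCoeff a b c) := rfl

@[simp]
lemma hypgeoCoeff_zero : hypgeoCoeff a b c 0 = 1 := by simp [hypgeoCoeff]

lemma hypgeoCoeff_succ (hc : ∀ i : ℕ, c + i ≠ 0) (n : ℕ) :
    (n + 1) * (n + c) * hypgeoCoeff a b c (n + 1) = (n + a) * (n + b) * hypgeoCoeff a b c n := by
  have hprod : ∏ i ∈ Finset.range n, (c + i) ≠ 0 := Finset.prod_ne_zero_iff.mpr fun i _ => hc i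
  have hcn : c + n ≠ 0 := hc n
  simp only [hypgeoCoeff, Finset.prod_range_succ, Nat.factorial_succ]
  push_cast
  field_simp
  ring

lemma abs_hypgeoCoeff_le_one (hc : 0 < c) (ha : |a| ≤ 1) (hb : |b| ≤ c) (n : ℕ) :
    |hypgeoCoeff a b c n| ≤ 1 := by
  induction n with
  | zero => simp
  | succ n ih =>
    have hpos : (0 : ℝ) < (n + 1) * (n + c) := by positivity
    have hab : |(n + a) * (n + b)| ≤ (n + 1) * (n + c) := by
      rw [abs_mul]
      exact mul_le_mul ((abs_add_le _ _).trans (by simpa using ha))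
        ((abs_add_le _ _).trans (by simpa using hb)) (abs_nonneg _) (by positivity)
    refine le_of_mul_le_mul_left ?_ hpos
    calc (n + 1) * (n + c) * |hypgeoCoeff a b c (n + 1)|
        = |(n + a) * (n + b)| * |hypgeoCoeff a b c n| := by
          rw [← abs_of_pos hpos, ← abs_mul, hypgeoCoeff_succ (fun i => by positivity), abs_mul]
      _ ≤ (n + 1) * (n + c) * 1 := mul_le_mul hab ih (abs_nonneg _) hpos.le

lemma polyBounded_hypgeoCoeff (hc : 0 < c) (ha : |a| ≤ 1) (hb : |b| ≤ c) :
    PolyBounded (hypgeoCoeff a b c) :=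
  polyBounded_of_abs_le (abs_hypgeoCoeff_le_one hc ha hb)

/-- With `θ = x d/dx` the equation reads `(θ + c) F' = (θ + a)(θ + b) F`, which coefficientwise is
`hypgeoCoeff_succ`. -/
theorem hypergeometricOp_powSeries_hypgeoCoeff (hc : ∀ i : ℕ, c + i ≠ 0)
    (hu : PolyBounded (hypgeoCoeff a b c)) {x : ℝ} (hx : |x| < 1) :
    hypergeometricOp a b c x (powSeries (hypgeoCoeff a b c) x)
      (powSeries (derivCoeff (hypgeoCoeff a b c)) x)
      (powSeries (derivCoeff (derivCoeff (hypgeoCoeff a b c))) x) = 0 := by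
  set u := hypgeoCoeff a b c
  have h₀ := (hu.summable_norm_mul_pow hx).of_norm.hasSum
  have h₁ := (hu.derivCoeff.summable_norm_mul_pow hx).of_norm.hasSum
  have h₂ := (hu.derivCoeff.derivCoeff.summable_norm_mul_pow hx).of_norm.hasSum
  have hx₁ := h₁.natCast_mul_of_derivCoeff
  have hx₂ := h₂.natCast_mul_of_derivCoeff
  -- `x² F'' = ∑ n (n - 1) uₙ xⁿ`
  have hxx₂ := HasSum.natCast_mul_of_derivCoeff (c := fun n => (n - 1) * u n)
    (by convert hx₂ using 2 with n; simp only [derivCoeff]; push_cast; ring)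
  have hsum := (hx₂.add (h₁.mul_left c)).sub
    ((hxx₂.add (hx₁.mul_left (a + b + 1))).add (h₀.mul_left (a * b)))
  have hterms : ∀ n : ℕ, n * derivCoeff u n * x ^ n + c * (derivCoeff u n * x ^ n) -
      (n * ((n - 1) * u n) * x ^ n + (a + b + 1) * (n * u n * x ^ n) + a * b * (u n * x ^ n))
      = 0 := fun n => by
    simp only [derivCoeff]
    linear_combination x ^ n * hypgeoCoeff_succ (a := a) (b := b) hc n
  simp only [hterms] at hsum
  unfold hypergeometricOp powSeries
  linear_combination hsum.unique hasSum_zero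

end Hypergeometric

lemma eq_of_continuousOn_ball_of_hasDerivAt_zero {V : ℝ → ℝ} {a ε : ℝ}
    (hV : ContinuousOn V (ball a ε)) (hV' : ∀ y ∈ ball a ε, y ≠ a → HasDerivAt V 0 y)
    {y : ℝ} (hy : y ∈ ball a ε) : V y = V a := by
  have hball := convex_iff_ordConnected.mp (convex_ball a ε)
  have ha : a ∈ ball a ε := mem_ball_self (pos_of_mem_ball hy)
  have hmvt : ∀ s t, s < t → s ∈ ball a ε → t ∈ ball a ε → a ∉ Ioo s t → V s = V t := by
    intro s t hst hs ht has
    obtain ⟨z, hz, hslope⟩ := exists_hasDerivAt_eq_slope V (fun _ => 0) hst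
      (hV.mono (hball.out hs ht)) fun z hz =>
        hV' z (hball.out hs ht (Ioo_subset_Icc_self hz)) (ne_of_mem_of_not_mem hz has)
    rw [eq_comm, div_eq_zero_iff, sub_eq_zero] at hslope
    exact (hslope.resolve_right (sub_ne_zero.mpr hst.ne')).symm
  rcases lt_trichotomy y a with h | rfl | h
  · exact hmvt y a h hy ha fun h' => lt_irrefl a h'.2
  · rfl
  · exact (hmvt a y h ha hy fun h' => lt_irrefl a h'.1).symm

section Uniqueness

variable {a b c ε : ℝ} {f f' f'' g g' g'' : ℝ → ℝ}

/-- The Wronskian `W` of two solutions satisfies `y (1 - y) W' + (c - (a + b + 1) y) W = 0`,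
so `W² |y|^(2c) (1 - y)^(2(a + b + 1 - c))` has derivative zero off `0`; it is continuous and, as
`c > 0`, vanishes at `0`, hence vanishes identically. -/
theorem wronskian_eq_zero_of_hypergeometricOp (hc : 0 < c) (hε : ε ≤ 1)
    (hf : ∀ y ∈ ball (0 : ℝ) ε, HasDerivAt f (f' y) y)
    (hf' : ∀ y ∈ ball (0 : ℝ) ε, HasDerivAt f' (f'' y) y)
    (hg : ∀ y ∈ ball (0 : ℝ) ε, HasDerivAt g (g' y) y)
    (hg' : ∀ y ∈ ball (0 : ℝ) ε, HasDerivAt g' (g'' y) y)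
    (hfOp : ∀ y ∈ ball (0 : ℝ) ε, y ≠ 0 → hypergeometricOp a b c y (f y) (f' y) (f'' y) = 0)
    (hgOp : ∀ y ∈ ball (0 : ℝ) ε, y ≠ 0 → hypergeometricOp a b c y (g y) (g' y) (g'' y) = 0)
    {y : ℝ} (hy : y ∈ ball (0 : ℝ) ε) (hy0 : y ≠ 0) : f y * g' y - f' y * g y = 0 := by
  set W := fun y => f y * g' y - f' y * g y
  set V := fun y => W y ^ 2 * (y ^ 2) ^ c * (1 - y) ^ (2 * (a + b + 1 - c))
  have h1 : ∀ y ∈ ball (0 : ℝ) ε, 0 < 1 - y := fun y hy => by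
    rw [mem_ball_zero_iff, norm_eq_abs] at hy
    linarith [le_abs_self y]
  have hW : ∀ y ∈ ball (0 : ℝ) ε, HasDerivAt W (f y * g'' y - f'' y * g y) y := fun y hy =>
    (((hf y hy).mul (hg' y hy)).sub ((hf' y hy).mul (hg y hy))).congr_deriv (by ring)
  have hV' : ∀ y ∈ ball (0 : ℝ) ε, y ≠ 0 → HasDerivAt V 0 y := by
    intro y hy hy0
    have hy2 : y ^ 2 ≠ 0 := pow_ne_zero 2 hy0
    refine ((((hW y hy).pow 2).mul ((hasDerivAt_pow 2 y).rpow_const (Or.inl hy2))).mul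
      (((hasDerivAt_id y).const_sub 1).rpow_const (Or.inl (h1 y hy).ne'))).congr_deriv ?_
    have hODE : y * (1 - y) * (f y * g'' y - f'' y * g y) + (c - (a + b + 1) * y) * W y = 0 := by
      have hfy := hfOp y hy hy0
      have hgy := hgOp y hy hy0
      unfold hypergeometricOp at hfy hgy
      linear_combination f y * hgy - g y * hfy
    simp only [id, Pi.mul_apply, Pi.pow_apply]
    rw [rpow_sub_one hy2, rpow_sub_one (h1 y hy).ne']
    calc _ = 2 * W y * (y ^ 2) ^ c * (1 - y) ^ (2 * (a + b + 1 - c)) / (y * (1 - y)) *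
          (y * (1 - y) * (f y * g'' y - f'' y * g y) + (c - (a + b + 1) * y) * W y) := by
          field_simp [(h1 y hy).ne']
          ring
      _ = 0 := by rw [hODE, mul_zero]
  have hVcont : ContinuousOn V (ball 0 ε) := by
    refine ContinuousOn.mul (ContinuousOn.mul ?_ ?_) ?_
    · exact fun y hy => (hW y hy).continuousAt.continuousWithinAt.pow 2
    · exact ((continuous_pow 2).rpow_const fun _ => Or.inr hc.le).continuousOn
    · exact (continuousOn_const.sub continuousOn_id).rpow_const fun y hy => Or.inl (h1 y hy).ne'
  have hV0 : V 0 = 0 := by simp [V, zero_rpow hc.ne']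
  have hVy := eq_of_continuousOn_ball_of_hasDerivAt_zero hVcont hV' hy
  rw [hV0] at hVy
  have hA : 0 < (y ^ 2) ^ c := rpow_pos_of_pos (by positivity) c
  have hB : 0 < (1 - y) ^ (2 * (a + b + 1 - c)) := rpow_pos_of_pos (h1 y hy) _
  simpa [V, hA.ne', hB.ne'] using hVy

theorem eqOn_ball_of_hypergeometricOp (hc : 0 < c) (hε : ε ≤ 1)
    (hf : ∀ y ∈ ball (0 : ℝ) ε, HasDerivAt f (f' y) y)
    (hf' : ∀ y ∈ ball (0 : ℝ) ε, HasDerivAt f' (f'' y) y)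
    (hg : ∀ y ∈ ball (0 : ℝ) ε, HasDerivAt g (g' y) y)
    (hg' : ∀ y ∈ ball (0 : ℝ) ε, HasDerivAt g' (g'' y) y)
    (hfOp : ∀ y ∈ ball (0 : ℝ) ε, y ≠ 0 → hypergeometricOp a b c y (f y) (f' y) (f'' y) = 0)
    (hgOp : ∀ y ∈ ball (0 : ℝ) ε, y ≠ 0 → hypergeometricOp a b c y (g y) (g' y) (g'' y) = 0)
    (hf0 : ∀ y ∈ ball (0 : ℝ) ε, f y ≠ 0) (h0 : f 0 = g 0) : EqOn f g (ball 0 ε) := by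
  intro y hy
  have hratio : ∀ y ∈ ball (0 : ℝ) ε, y ≠ 0 → HasDerivAt (fun y => g y / f y) 0 y :=
    fun y hy hy0 => ((hg y hy).div (hf y hy) (hf0 y hy)).congr_deriv <| by
      rw [div_eq_zero_iff]
      left
      linear_combination
        wronskian_eq_zero_of_hypergeometricOp hc hε hf hf' hg hg' hfOp hgOp hy hy0
  have hcont : ContinuousOn (fun y => g y / f y) (ball 0 ε) := fun y hy =>
    ((hg y hy).continuousAt.div (hf y hy).continuousAt (hf0 y hy)).continuousWithinAt
  have h := eq_of_continuousOn_ball_of_hasDerivAt_zero hcont hratio hy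
  rw [← h0, div_self (hf0 0 (mem_ball_self (pos_of_mem_ball hy)))] at h
  exact ((div_eq_one_iff_eq (hf0 y hy)).mp h).symm

end Uniqueness

/-- The arguments of the conclusion are `w · G ∘ Z` and its first two derivatives at `x`, with
`z = Z x`, `z' = Z' x`, …. Once `G''` is eliminated with the equation `hG`, `h₁` and `h₀` say that
the coefficients of `G'` and of `G` vanish. -/
lemma hypergeometricOp_pullback {a b c a' b' c' x z w w' w'' z' z'' G G' G'' : ℝ}
    (hz : z * (1 - z) ≠ 0) (hG : hypergeometricOp a' b' c' z G G' G'' = 0)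
    (h₁ : z * (1 - z) * (x * (1 - x) * (2 * w' * z' + w * z'') + (c - (a + b + 1) * x) * w * z')
      = x * (1 - x) * w * z' ^ 2 * (c' - (a' + b' + 1) * z))
    (h₀ : z * (1 - z) * hypergeometricOp a b c x w w' w''
      = -(x * (1 - x) * w * z' ^ 2 * (a' * b'))) :
    hypergeometricOp a b c x (w * G) (w' * G + w * (G' * z'))
      (w'' * G + 2 * w' * (G' * z') + w * (G'' * z' ^ 2 + G' * z'')) = 0 := by
  refine (mul_eq_zero.mp ?_).resolve_left hz
  unfold hypergeometricOp at *
  linear_combination G' * h₁ + G * h₀ + x * (1 - x) * w * z' ^ 2 * hG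

def kleinU (x : ℝ) : ℝ := 1 - 42 * x - 7 * x ^ 2

def kleinP (x : ℝ) : ℝ := x ^ 2 - 42 * x - 7

def kleinT (x : ℝ) : ℝ := x ^ 4 + 108 * x ^ 3 - 218 * x ^ 2 + 108 * x + 1

def kleinZ (x : ℝ) : ℝ := x * kleinP x ^ 3 / kleinU x ^ 3

lemma kleinZ_eq (x : ℝ) :
    -(x * (x ^ 2 - 42 * x - 7) ^ 3) / (7 * x ^ 2 + 42 * x - 1) ^ 3 = kleinZ x := by
  rw [show (7 * x ^ 2 + 42 * x - 1) ^ 3 = -kleinU x ^ 3 by unfold kleinU; ring, neg_div_neg_eq]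
  rfl

def kleinZ' (x : ℝ) : ℝ := -7 * kleinP x ^ 2 * kleinT x / kleinU x ^ 4

def kleinZ'' (x : ℝ) : ℝ :=
  -7 * kleinP x * (2 * (2 * x - 42) * kleinT x * kleinU x
    + kleinP x * (4 * x ^ 3 + 324 * x ^ 2 - 436 * x + 108) * kleinU x
    + 4 * kleinP x * kleinT x * (42 + 14 * x)) / kleinU x ^ 5

def kleinW (x : ℝ) : ℝ := kleinU x ^ (1 / 4 : ℝ)

def kleinW' (x : ℝ) : ℝ := -(7 / 2) * (x + 3) * kleinW x / kleinU x

def kleinW'' (x : ℝ) : ℝ :=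
  -(7 / 2) * kleinW x * (kleinU x + 21 / 2 * (x + 3) ^ 2) / kleinU x ^ 2

lemma klein_pullback_condition₁ {x : ℝ} (hU : kleinU x ≠ 0) :
    kleinZ x * (1 - kleinZ x) *
        (x * (1 - x) * (2 * kleinW' x * kleinZ' x + kleinW x * kleinZ'' x)
          + (2 / 3 - (-1 / 4 + -7 / 12 + 1) * x) * kleinW x * kleinZ' x)
      = x * (1 - x) * kleinW x * kleinZ' x ^ 2 * (2 / 3 - (1 / 4 + -1 / 12 + 1) * kleinZ x) := by
  simp only [kleinZ, kleinZ', kleinZ'', kleinW', kleinP, kleinT]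
  field_simp
  simp only [kleinU]
  ring

lemma klein_pullback_condition₀ {x : ℝ} (hU : kleinU x ≠ 0) :
    kleinZ x * (1 - kleinZ x) * hypergeometricOp (-1 / 4) (-7 / 12) (2 / 3) x
        (kleinW x) (kleinW' x) (kleinW'' x)
      = -(x * (1 - x) * kleinW x * kleinZ' x ^ 2 * (1 / 4 * (-1 / 12))) := by
  simp only [hypergeometricOp, kleinZ, kleinZ', kleinW', kleinW'', kleinP, kleinT]
  field_simp
  simp only [kleinU]
  ring

lemma hasDerivAt_kleinU (x : ℝ) : HasDerivAt kleinU (-(42 + 14 * x)) x :=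
  ((((hasDerivAt_id' x).const_mul 42).const_sub 1).sub
    ((hasDerivAt_pow 2 x).const_mul 7)).congr_deriv (by ring)

lemma hasDerivAt_kleinP (x : ℝ) : HasDerivAt kleinP (2 * x - 42) x :=
  (((hasDerivAt_pow 2 x).sub ((hasDerivAt_id' x).const_mul 42)).sub_const 7).congr_deriv
    (by ring)

lemma hasDerivAt_kleinT (x : ℝ) :
    HasDerivAt kleinT (4 * x ^ 3 + 324 * x ^ 2 - 436 * x + 108) x :=
  (((((hasDerivAt_pow 4 x).add ((hasDerivAt_pow 3 x).const_mul 108)).sub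
    ((hasDerivAt_pow 2 x).const_mul 218)).add ((hasDerivAt_id' x).const_mul 108)).add_const
      1).congr_deriv (by push_cast; ring)

section KleinDerivatives

variable {x : ℝ}

lemma hasDerivAt_kleinZ (hU : kleinU x ≠ 0) : HasDerivAt kleinZ (kleinZ' x) x :=
  (((hasDerivAt_id' x).mul ((hasDerivAt_kleinP x).pow 3)).div ((hasDerivAt_kleinU x).pow 3)
    (pow_ne_zero 3 hU)).congr_deriv <| by
      simp only [Pi.pow_apply, Pi.mul_apply, kleinZ', kleinP, kleinT]
      field_simp
      simp only [kleinU]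
      ring

lemma hasDerivAt_kleinZ' (hU : kleinU x ≠ 0) : HasDerivAt kleinZ' (kleinZ'' x) x :=
  (((((hasDerivAt_kleinP x).pow 2).const_mul (-7)).mul (hasDerivAt_kleinT x)).div
    ((hasDerivAt_kleinU x).pow 4) (pow_ne_zero 4 hU)).congr_deriv <| by
      simp only [Pi.pow_apply, Pi.mul_apply, kleinZ'']
      field_simp
      ring

lemma hasDerivAt_kleinW (hU : 0 < kleinU x) : HasDerivAt kleinW (kleinW' x) x :=
  ((hasDerivAt_kleinU x).rpow_const (p := 1 / 4) (Or.inl hU.ne')).congr_deriv <| by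
    rw [rpow_sub_one hU.ne', kleinW', kleinW]
    field_simp
    ring

lemma hasDerivAt_kleinW' (hU : 0 < kleinU x) : HasDerivAt kleinW' (kleinW'' x) x :=
  (((((hasDerivAt_id' x).add_const 3).const_mul (-(7 / 2))).mul (hasDerivAt_kleinW hU)).div
    (hasDerivAt_kleinU x) hU.ne').congr_deriv <| by
      simp only [Pi.mul_apply, kleinW'', kleinW']
      field_simp
      ring

end KleinDerivatives

section KleinPullback

variable (u : ℕ → ℝ)

def kleinPullback (x : ℝ) : ℝ := kleinW x * powSeries u (kleinZ x)

def kleinPullback' (x : ℝ) : ℝ :=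
  kleinW' x * powSeries u (kleinZ x) + kleinW x * (powSeries (derivCoeff u) (kleinZ x) * kleinZ' x)

def kleinPullback'' (x : ℝ) : ℝ :=
  kleinW'' x * powSeries u (kleinZ x)
    + 2 * kleinW' x * (powSeries (derivCoeff u) (kleinZ x) * kleinZ' x)
    + kleinW x * (powSeries (derivCoeff (derivCoeff u)) (kleinZ x) * kleinZ' x ^ 2
      + powSeries (derivCoeff u) (kleinZ x) * kleinZ'' x)

variable {u} {x : ℝ}

lemma kleinPullback_zero : kleinPullback u 0 = u 0 := by
  simp [kleinPullback, kleinW, kleinZ, kleinU, powSeries_zero]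

lemma hasDerivAt_kleinPullback (hu : PolyBounded u) (hU : 0 < kleinU x) (hZ : |kleinZ x| < 1) :
    HasDerivAt (kleinPullback u) (kleinPullback' u x) x :=
  (hasDerivAt_kleinW hU).mul ((hu.hasDerivAt_powSeries hZ).comp x (hasDerivAt_kleinZ hU.ne'))

lemma hasDerivAt_kleinPullback' (hu : PolyBounded u) (hU : 0 < kleinU x)
    (hZ : |kleinZ x| < 1) : HasDerivAt (kleinPullback' u) (kleinPullback'' u x) x := by
  have hZ' := hasDerivAt_kleinZ hU.ne'
  exact (((hasDerivAt_kleinW' hU).mul ((hu.hasDerivAt_powSeries hZ).comp x hZ')).add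
    ((hasDerivAt_kleinW hU).mul (((hu.derivCoeff.hasDerivAt_powSeries hZ).comp x hZ').mul
      (hasDerivAt_kleinZ' hU.ne')))).congr_deriv <| by
        simp only [kleinPullback'', Pi.mul_apply, Function.comp_apply]
        ring

lemma polyBounded_hypgeoCoeff_tetrahedral : PolyBounded (hypgeoCoeff (1 / 4) (-1 / 12) (2 / 3)) :=
  polyBounded_hypgeoCoeff (by norm_num) (by norm_num [abs_le]) (by norm_num [abs_le])

lemma polyBounded_hypgeoCoeff_source : PolyBounded (hypgeoCoeff (-1 / 4) (-7 / 12) (2 / 3)) :=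
  polyBounded_hypgeoCoeff (by norm_num) (by norm_num [abs_le]) (by norm_num [abs_le])

lemma hypergeometricOp_kleinPullback (hU : 0 < kleinU x) (hZ : |kleinZ x| < 1) (hx : x ≠ 0)
    (hP : kleinP x ≠ 0) :
    hypergeometricOp (-1 / 4) (-7 / 12) (2 / 3) x
      (kleinPullback (hypgeoCoeff (1 / 4) (-1 / 12) (2 / 3)) x)
      (kleinPullback' (hypgeoCoeff (1 / 4) (-1 / 12) (2 / 3)) x)
      (kleinPullback'' (hypgeoCoeff (1 / 4) (-1 / 12) (2 / 3)) x) = 0 := by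
  have hZ0 : kleinZ x ≠ 0 :=
    div_ne_zero (mul_ne_zero hx (pow_ne_zero 3 hP)) (pow_ne_zero 3 hU.ne')
  have hZ1 : 1 - kleinZ x ≠ 0 := sub_ne_zero.mpr (lt_of_abs_lt hZ).ne'
  exact hypergeometricOp_pullback (mul_ne_zero hZ0 hZ1)
    (hypergeometricOp_powSeries_hypgeoCoeff (fun i => by positivity)
      polyBounded_hypgeoCoeff_tetrahedral hZ)
    (klein_pullback_condition₁ hU.ne') (klein_pullback_condition₀ hU.ne')

end KleinPullback

lemma exists_ball_klein :
    ∃ ε > 0, ε ≤ 1 ∧ ∀ y ∈ ball (0 : ℝ) ε, 0 < kleinU y ∧ kleinP y ≠ 0 ∧ |kleinZ y| < 1 ∧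
      powSeries (hypgeoCoeff (-1 / 4) (-7 / 12) (2 / 3)) y ≠ 0 := by
  have hU0 : kleinU 0 = 1 := by norm_num [kleinU]
  have hZ := (hasDerivAt_kleinZ (x := 0) (by rw [hU0]; exact one_ne_zero)).continuousAt
  have hf := polyBounded_hypgeoCoeff_source.hasDerivAt_powSeries (x := 0) (by simp)
  have hUev : ∀ᶠ y in 𝓝 (0 : ℝ), 0 < kleinU y :=
    continuousAt_const.eventually_lt (hasDerivAt_kleinU 0).continuousAt (by simp [hU0])
  have hPev : ∀ᶠ y in 𝓝 (0 : ℝ), kleinP y ≠ 0 :=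
    (hasDerivAt_kleinP 0).continuousAt.eventually_ne (by norm_num [kleinP])
  have hZev : ∀ᶠ y in 𝓝 (0 : ℝ), |kleinZ y| < 1 :=
    hZ.abs.eventually_lt continuousAt_const (by simp [kleinZ])
  have hfev : ∀ᶠ y in 𝓝 (0 : ℝ), powSeries (hypgeoCoeff (-1 / 4) (-7 / 12) (2 / 3)) y ≠ 0 :=
    hf.continuousAt.eventually_ne (by simp [powSeries_zero])
  obtain ⟨ε, hε, hball⟩ := eventually_nhds_iff_ball.mp (hUev.and (hPev.and (hZev.and hfev)))
  exact ⟨min ε 1, by positivity, min_le_right _ _,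
    fun y hy => hball y (ball_subset_ball (min_le_left _ _) hy)⟩

theorem stmt18 : ∃ ε > 0, ∀ X : ℝ, |X| < ε →
    hypgeo (-1/4) (-7/12) (2/3) X =
      (1 - 42*X - 7*X^2) ^ ((1 : ℝ)/4) *
        hypgeo (1/4) (-1/12) (2/3) (-(X * (X^2 - 42*X - 7)^3) / (7*X^2 + 42*X - 1)^3) := by
  obtain ⟨ε, hε, hε1, hgood⟩ := exists_ball_klein
  have hf := polyBounded_hypgeoCoeff_source
  have hg := polyBounded_hypgeoCoeff_tetrahedral
  have h1 : ∀ y ∈ ball (0 : ℝ) ε, |y| < 1 := fun y hy =>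
    (mem_ball_zero_iff.mp hy).trans_le hε1
  refine ⟨ε, hε, fun X hX => ?_⟩
  rw [hypgeo_eq_powSeries, hypgeo_eq_powSeries, kleinZ_eq]
  exact eqOn_ball_of_hypergeometricOp (by norm_num) hε1
    (fun y hy => hf.hasDerivAt_powSeries (h1 y hy))
    (fun y hy => hf.derivCoeff.hasDerivAt_powSeries (h1 y hy))
    (fun y hy => hasDerivAt_kleinPullback hg (hgood y hy).1 (hgood y hy).2.2.1)
    (fun y hy => hasDerivAt_kleinPullback' hg (hgood y hy).1 (hgood y hy).2.2.1)
    (fun y hy _ => hypergeometricOp_powSeries_hypgeoCoeff (fun i => by positivity) hf (h1 y hy))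
    (fun y hy hy0 => hypergeometricOp_kleinPullback (hgood y hy).1 (hgood y hy).2.2.1 hy0
      (hgood y hy).2.1)
    (fun y hy => (hgood y hy).2.2.2) (by simp [powSeries_zero, kleinPullback_zero])
    (mem_ball_zero_iff.mpr hX)
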